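/- arXiv:1201.3825 — 2 statements merged into one kernel-verified Lean document; each statement's English description precedes it below -/
import Mathlib

section
/- Let p be a monic irreducible polynomial of degree n over F_q with root α and companion matrix P, let φ : F_q^n → F_q[α] be the isomorphism (v_1,...,v_n) ↦ Σ v_i α^{i−1}, and let φ' : G_q(k,n) → P(Λ^k(F_q[α])) be the map sending the row space of a matrix with rows U_1,...,U_k to the class of φ(U_1) ∧ ... ∧ φ(U_k). Define the action * of F_q[α]\{0} on Λ^k(F_q[α]) by (v_1 ∧ ... ∧ v_k) * β = (v_1 β) ∧ ... ∧ (v_k β), extended linearly. Then for every U ∈ G_q(k,n), φ'(U·P) = φ'(U) * α; consequently, the Plücker image of the orbit code C = { U·P^i : i = 0,...,ord(P)−1 } is the orbit φ'(C) = { φ'(U) * α^i : i = 0,...,ord(α)−1 }. -/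
open Matrix Module

/-- The companion matrix of a polynomial `p` of degree `n`, acting on row vectors from the
right: it has `1`s on the superdiagonal and the negated coefficients of `p` in the last row. -/
def companionMatrix {F : Type*} [Field F] (n : ℕ) (p : Polynomial F) :
    Matrix (Fin n) (Fin n) F :=
  Matrix.of fun i j =>
    if (i : ℕ) + 1 = n then -p.coeff (j : ℕ)
    else if (j : ℕ) = (i : ℕ) + 1 then 1 else 0

/-- The canonical `F`-linear isomorphism `F^n → F[α]`, `(v_1,…,v_n) ↦ Σ v_i α^(i-1)`. -/
def phiMap {F L : Type*} [Field F] [Field L] [Algebra F L] (n : ℕ) (α : L)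
    (v : Fin n → F) : L :=
  ∑ i : Fin n, v i • α ^ (i : ℕ)

/-- The action `x * β` on the exterior algebra `Λ(F[α])` induced by multiplication by `β` on
`F[α]`; on decomposables, `(v₁ ∧ ⋯ ∧ v_k) * β = (v₁β) ∧ ⋯ ∧ (v_kβ)`. -/
noncomputable def starAction {F L : Type*} [Field F] [Field L] [Algebra F L] (β : L) :
    ExteriorAlgebra F L →ₐ[F] ExteriorAlgebra F L :=
  ExteriorAlgebra.map (LinearMap.mulRight F β)


lemma phi_vecMul {F L : Type*} [Field F] [Field L] [Algebra F L]
    (n : ℕ) (p : Polynomial F) (hmonic : p.Monic)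
    (hdeg : p.natDegree = n) (α : L) (hroot : Polynomial.aeval α p = 0)
    (v : Fin n → F) :
    phiMap n α (Matrix.vecMul v (companionMatrix n p)) = phiMap n α v * α := by
  have hαn : ∑ j : Fin n, p.coeff (j : ℕ) • α ^ (j : ℕ) = -α ^ n := by
    have h := Polynomial.aeval_eq_sum_range (p := p) α
    rw [hroot, hdeg, Finset.sum_range_succ] at h
    have hc : p.coeff n = 1 := by rw [← hdeg]; exact hmonic.coeff_natDegree
    rw [hc, one_smul] at h
    rw [Fin.sum_univ_eq_sum_range (fun j => p.coeff j • α ^ j) n]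
    exact eq_neg_of_add_eq_zero_left h.symm
  have key : ∀ i : Fin n,
      (∑ j : Fin n, companionMatrix n p i j • α ^ (j : ℕ)) = α ^ ((i : ℕ) + 1) := by
    intro i
    by_cases hi : (i : ℕ) + 1 = n
    · simp only [companionMatrix, Matrix.of_apply, hi, if_true, neg_smul,
        Finset.sum_neg_distrib, hαn, hi]
      rw [← hi]
      ring
    · simp only [companionMatrix, Matrix.of_apply, hi, if_false]
      have hlt : (i : ℕ) + 1 < n := lt_of_le_of_ne i.2 hi
      rw [Finset.sum_eq_single (⟨(i : ℕ) + 1, hlt⟩ : Fin n)]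
      · simp
      · intro b _ hb
        have : (b : ℕ) ≠ (i : ℕ) + 1 := fun h => hb (Fin.ext h)
        simp [this]
      · simp
  calc phiMap n α (Matrix.vecMul v (companionMatrix n p))
      = ∑ j : Fin n, (∑ i : Fin n, v i * companionMatrix n p i j) • α ^ (j : ℕ) := by
        simp [phiMap, Matrix.vecMul, dotProduct]
    _ = ∑ i : Fin n, v i • ∑ j : Fin n, companionMatrix n p i j • α ^ (j : ℕ) := by
        simp only [Finset.sum_smul]
        rw [Finset.sum_comm]
        simp [Finset.smul_sum, mul_smul]
    _ = ∑ i : Fin n, v i • α ^ ((i : ℕ) + 1) := by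
        exact Finset.sum_congr rfl fun i _ => by rw [key i]
    _ = phiMap n α v * α := by
        simp [phiMap, Finset.sum_mul, smul_mul_assoc, pow_succ]

lemma star_iMulti {F L : Type*} [Field F] [Field L] [Algebra F L] (β : L) (k : ℕ)
    (f : Fin k → L) :
    starAction β (ExteriorAlgebra.ιMulti F k f) =
      ExteriorAlgebra.ιMulti F k (fun i => f i * β) := by
  rw [starAction, ExteriorAlgebra.map_apply_ιMulti]
  rfl

lemma phi_vecMul_pow {F L : Type*} [Field F] [Field L] [Algebra F L]
    (n : ℕ) (p : Polynomial F) (hmonic : p.Monic)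
    (hdeg : p.natDegree = n) (α : L) (hroot : Polynomial.aeval α p = 0)
    (v : Fin n → F) (i : ℕ) :
    phiMap n α (Matrix.vecMul v ((companionMatrix n p) ^ i)) = phiMap n α v * α ^ i := by
  induction i with
  | zero => simp
  | succ m ih =>
      rw [pow_succ, ← Matrix.vecMul_vecMul,
        phi_vecMul n p hmonic hdeg α hroot, ih, pow_succ, mul_assoc]

/-- with `P` the companion matrix of a monic irreducible `p` of degree `n` over
`F = F_q`, `α` a root of `p`, `φ` the canonical isomorphism `F^n → F[α]`, and `φ'` the Plücker
map sending (the row space of) a matrix with rows `U₁, …, U_k` to `φ(U₁) ∧ ⋯ ∧ φ(U_k)`: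
for every `U` one has `φ'(U·P) = φ'(U) * α`; consequently the Plücker image of the orbit code
`{U·P^i}` is the `*`-orbit `{φ'(U) * α^i}`. -/
theorem stmt14 (F L : Type*) [Field F] [Fintype F] [Field L] [Algebra F L]
    (n k : ℕ) (p : Polynomial F) (hmonic : p.Monic) (hirr : Irreducible p)
    (hdeg : p.natDegree = n) (hn : finrank F L = n)
    (α : L) (hroot : Polynomial.aeval α p = 0) :
    (∀ U : Matrix (Fin k) (Fin n) F,
        ExteriorAlgebra.ιMulti F k
            (fun i => phiMap n α (Matrix.vecMul (U i) (companionMatrix n p))) =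
          starAction α (ExteriorAlgebra.ιMulti F k (fun i => phiMap n α (U i)))) ∧
      ∀ U : Matrix (Fin k) (Fin n) F,
        {x : ExteriorAlgebra F L | ∃ i : ℕ,
            x = ExteriorAlgebra.ιMulti F k
              (fun j => phiMap n α (Matrix.vecMul (U j) ((companionMatrix n p) ^ i)))} =
          {x : ExteriorAlgebra F L | ∃ i : ℕ,
            x = starAction (α ^ i)
              (ExteriorAlgebra.ιMulti F k (fun j => phiMap n α (U j)))} := by
  constructor
  · intro U
    rw [star_iMulti]
    congr 1
    funext i
    exact phi_vecMul n p hmonic hdeg α hroot (U i)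
  · intro U
    ext x
    simp only [Set.mem_setOf_eq]
    constructor <;> rintro ⟨i, rfl⟩ <;> refine ⟨i, ?_⟩ <;>
      rw [star_iMulti] <;> congr 1 <;> funext j <;>
      [exact phi_vecMul_pow n p hmonic hdeg α hroot (U j) i;
       exact (phi_vecMul_pow n p hmonic hdeg α hroot (U j) i).symm]
end

section
/- Let U ∈ G_q(k,n) and t ≥ 0, and let F : {0} ⊂ V_1 ⊂ V_2 ⊂ ... ⊂ V_n = F_q^n be any complete flag (dim V_i = i) with V_k = U. Set the multi-index i = (t+1, t+2, ..., k, n−t+1, ..., n) (so i_s = t+s for 1 ≤ s ≤ k−t and i_s = n−k+s for k−t < s ≤ k). Then the Schubert variety S(i; F) = { V ∈ G_q(k,n) : dim(V ∩ V_{i_s}) ≥ s for all s = 1, ..., k } equals the ball B_{2t}(U) = { V ∈ G_q(k,n) : d_S(U, V) ≤ 2t } around U in the subspace distance. -/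
/-
For `W` of dimension `k`, `d_S(U,W) ≤ 2t` says exactly `dim (W ∩ U) ≥ k - t`, which, as `U = V_k`,
is the Schubert condition at `s = k - t`. Conversely, the conditions for `s ≤ k - t` concern
`V_{t+s} ⊆ U`, and those for `s > k - t` concern `V_{n-k+s}`; in both cases Grassmann's formula
`dim A + dim B ≤ dim C + dim (A ∩ B)` for `A, B ⊆ C` (with `C = U`, resp. `C = F^n`) gives them.
-/

open Module

noncomputable def subspaceDist {F : Type*} [Field F] {n : ℕ}
    (U V : Submodule F (Fin n → F)) : ℕ :=
  finrank F U + finrank F V - 2 * finrank F ↥(U ⊓ V)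

/-- The multi-index `i = (t+1, t+2, …, k, n-t+1, …, n)` (`1`-indexed): `i_s = t + s` for
`1 ≤ s ≤ k - t` and `i_s = n - k + s` for `k - t < s ≤ k`. -/
def schubertIndex (n k t : ℕ) : ℕ → ℕ :=
  fun s => if s ≤ k - t then t + s else n - k + s

theorem monotoneOn_Iic_of_lt_add_one {α : Type*} [Preorder α] {V : ℕ → α} {n : ℕ}
    (hV : ∀ i < n, V i < V (i + 1)) : MonotoneOn V (Set.Iic n) :=
  monotoneOn_of_le_add_one Set.ordConnected_Iic fun i _ _ hi => (hV i hi).le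

namespace Submodule

variable {K E : Type*} [DivisionRing K] [AddCommGroup E] [Module K E]

theorem finrank_add_finrank_le_finrank_add_finrank_inf {A B C : Submodule K E}
    [FiniteDimensional K C] (hA : A ≤ C) (hB : B ≤ C) :
    finrank K A + finrank K B ≤ finrank K C + finrank K ↥(A ⊓ B) := by
  have := Submodule.finiteDimensional_of_le hA
  have := Submodule.finiteDimensional_of_le hB
  rw [← finrank_sup_add_finrank_inf_eq]
  exact Nat.add_le_add_right (finrank_mono (sup_le hA hB)) _

end Submodule

theorem subspaceDist_le_two_mul_iff {F : Type*} [Field F] {n k t : ℕ}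
    {U W : Submodule F (Fin n → F)} (hU : finrank F U = k) (hW : finrank F W = k) :
    subspaceDist U W ≤ 2 * t ↔ k - t ≤ finrank F ↥(W ⊓ U) := by
  rw [subspaceDist, hU, hW, inf_comm]
  omega

theorem schubertIndex_of_le {n k t s : ℕ} (hs : s ≤ k - t) : schubertIndex n k t s = t + s :=
  if_pos hs

theorem schubertIndex_of_not_le {n k t s : ℕ} (hs : ¬s ≤ k - t) :
    schubertIndex n k t s = n - k + s :=
  if_neg hs

theorem stmt16_general (F : Type*) [Field F] (n k t : ℕ)
    (hkn : k ≤ n)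
    (U : Submodule F (Fin n → F)) (hU : finrank F U = k)
    (V : ℕ → Submodule F (Fin n → F))
    (hchain : ∀ i < n, V i < V (i + 1))
    (hdim : ∀ i ≤ n, finrank F (V i) = i)
    (hVk : V k = U) :
    {W : Submodule F (Fin n → F) | finrank F W = k ∧
        ∀ s : ℕ, 1 ≤ s → s ≤ k → s ≤ finrank F ↥(W ⊓ V (schubertIndex n k t s))} =
      {W : Submodule F (Fin n → F) | finrank F W = k ∧ subspaceDist U W ≤ 2 * t} := by
  ext W
  simp only [Set.mem_ofPred_eq, and_congr_right_iff]
  intro hW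
  rw [subspaceDist_le_two_mul_iff hU hW]
  constructor
  · intro hschubert
    rcases Nat.eq_zero_or_pos (k - t) with hkt | hkt
    · omega
    · have h := hschubert (k - t) hkt (Nat.sub_le k t)
      rwa [schubertIndex_of_le le_rfl, Nat.add_sub_of_le (by omega), hVk] at h
  · intro hball s hs1 hsk
    by_cases hs : s ≤ k - t
    · rw [schubertIndex_of_le hs]
      have hVU : V (t + s) ≤ U := hVk ▸ monotoneOn_Iic_of_lt_add_one hchain
        (Set.mem_Iic.2 (by omega)) (Set.mem_Iic.2 hkn) (by omega)
      have hgrassmann := Submodule.finrank_add_finrank_le_finrank_add_finrank_inf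
        (inf_le_right : W ⊓ U ≤ U) hVU
      rw [inf_assoc, inf_eq_right.2 hVU, hdim _ (by omega)] at hgrassmann
      omega
    · rw [schubertIndex_of_not_le hs]
      have hgrassmann := Submodule.finrank_add_finrank_le_finrank_add_finrank_inf
        (le_top : W ≤ ⊤) (le_top : V (n - k + s) ≤ ⊤)
      rw [finrank_top, finrank_fin_fun, hdim _ (by omega)] at hgrassmann
      omega

/-- let `U` be a `k`-dimensional subspace of `F_q^n`, `t ≥ 0`, and
`F : {0} ⊂ V₁ ⊂ ⋯ ⊂ Vₙ = F_q^n` a complete flag with `V_k = U`.  For the multi-index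
`i = (t+1, …, k, n-t+1, …, n)`, the Schubert variety
`S(i; F) = {W ∈ G_q(k,n) : dim(W ∩ V_{i_s}) ≥ s for all s}` equals the ball
`B_{2t}(U) = {W ∈ G_q(k,n) : d_S(U,W) ≤ 2t}`. -/
theorem stmt16 (F : Type*) [Field F] [Fintype F] (n k t : ℕ)
    (hkpos : 0 < k) (hkn : k ≤ n) (ht : t ≤ k)
    (U : Submodule F (Fin n → F)) (hU : finrank F U = k)
    (V : ℕ → Submodule F (Fin n → F))
    (hchain : ∀ i < n, V i < V (i + 1))
    (hdim : ∀ i ≤ n, finrank F (V i) = i)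
    (htop : V n = ⊤) (hVk : V k = U) :
    {W : Submodule F (Fin n → F) | finrank F W = k ∧
        ∀ s : ℕ, 1 ≤ s → s ≤ k → s ≤ finrank F ↥(W ⊓ V (schubertIndex n k t s))} =
      {W : Submodule F (Fin n → F) | finrank F W = k ∧ subspaceDist U W ≤ 2 * t} :=
  stmt16_general F n k t hkn U hU V hchain hdim hVk
end
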